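/- Fix integers 1 ≤ d ≤ d' and a real s ≥ d. Let A and B be bounded subsets of ℝ^{d'} with dist(A,B) = inf{|a−b| : a ∈ A, b ∈ B} > 0, and set ḡ_A = limsup_{N→∞} ℰ_s(A,N)/τ_{s,d}(N) and ḡ_B = limsup_{N→∞} ℰ_s(B,N)/τ_{s,d}(N), taken in [0,∞]. Then limsup_{N→∞} ℰ_s(A∪B,N)/τ_{s,d}(N) ≤ (ḡ_A^{−d/s} + ḡ_B^{−d/s})^{−s/d}, where the right-hand side is interpreted in [0,∞] with the conventions ∞^{−d/s} = 0 and 0^{−d/s} = ∞ (in particular it is 0 if ḡ_A = 0 or ḡ_B = 0). -/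

import Mathlib

/-!
Split `N = m + n` with `m ≈ αN`, `n ≈ (1 - α)N`, and put a near-optimal `m`-point configuration
in `A` and a near-optimal `n`-point one in `B`. The separation `δ` bounds the cross interactions by
`2mn δ^{-s} = O(N²) = o(τ_{s,d}(N))`, while `τ_{s,d}(αN) ~ α^{1+s/d} τ_{s,d}(N)`; hence
`ḡ_{A∪B} ≤ ḡ_A α^{1+s/d} + ḡ_B (1-α)^{1+s/d}` for every `α ∈ (0,1)`. For finite positive
`ḡ_A, ḡ_B` the choice `α = ḡ_A^{-d/s} / (ḡ_A^{-d/s} + ḡ_B^{-d/s})` turns the right side into the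
claimed bound; when one of them is `0` or `∞`, the monotonicity `ḡ_{A∪B} ≤ min ḡ_A ḡ_B` suffices.
-/

open scoped ENNReal NNReal BigOperators Classical
open MeasureTheory Filter Metric Set Topology

/-- The Riesz `s`-energy of a finite configuration `ω`, valued in `[0,∞]`. -/
noncomputable def rieszEnergy {E : Type*} [PseudoEMetricSpace E] (s : ℝ) (ω : Finset E) : ℝ≥0∞ :=
  ∑ x ∈ ω, ∑ y ∈ ω, if x = y then 0 else edist x y ^ (-s)

/-- The `N`-point minimal Riesz `s`-energy over a set `A` (infimum over all `N`-point
subsets of `A`; `∞` if there is none). -/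
noncomputable def minRieszEnergy {E : Type*} [PseudoEMetricSpace E] (s : ℝ) (A : Set E)
    (N : ℕ) : ℝ≥0∞ :=
  ⨅ (ω : Finset E) (_ : ↑ω ⊆ A) (_ : ω.card = N), rieszEnergy s ω

/-- The normalizing sequence `τ_{s,d}(N)`: `N^{1+s/d}` for `s > d` and `N² log N` for `s = d`. -/
noncomputable def tauNorm (s : ℝ) (d : ℕ) (N : ℕ) : ℝ :=
  if s = (d : ℝ) then (N : ℝ) ^ 2 * Real.log N else (N : ℝ) ^ (1 + s / (d : ℝ))

section Energy

variable {X : Type*}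

lemma minRieszEnergy_anti [PseudoEMetricSpace X] (s : ℝ) {A A' : Set X} (h : A ⊆ A') (N : ℕ) :
    minRieszEnergy s A' N ≤ minRieszEnergy s A N :=
  iInf_mono fun _ => iInf_mono' fun hω => ⟨hω.trans h, le_rfl⟩

lemma minRieszEnergy_le_rieszEnergy [PseudoEMetricSpace X] (s : ℝ) {A : Set X} {ω : Finset X}
    (hω : ↑ω ⊆ A) : minRieszEnergy s A ω.card ≤ rieszEnergy s ω :=
  iInf₂_le_of_le ω hω (iInf_le _ rfl)

variable [PseudoMetricSpace X] {s δ : ℝ}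

lemma disjoint_of_forall_le_dist (hδ : 0 < δ) {ω ω' : Finset X}
    (hsep : ∀ a ∈ ω, ∀ b ∈ ω', δ ≤ dist a b) : Disjoint ω ω' :=
  Finset.disjoint_left.2 fun x hx hx' =>
    (hδ.trans_le ((hsep x hx x hx').trans_eq (dist_self x))).false

lemma edist_rpow_neg_le (hs : 0 ≤ s) (hδ : 0 < δ) {a b : X} (h : δ ≤ dist a b) :
    edist a b ^ (-s) ≤ ENNReal.ofReal (δ ^ (-s)) := by
  rw [edist_dist, ENNReal.ofReal_rpow_of_pos (hδ.trans_le h)]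
  exact ENNReal.ofReal_le_ofReal (Real.rpow_le_rpow_of_nonpos hδ h (neg_nonpos.2 hs))

lemma sum_sum_ite_edist_rpow_neg_le (hs : 0 ≤ s) (hδ : 0 < δ) {ω ω' : Finset X}
    (hsep : ∀ a ∈ ω, ∀ b ∈ ω', δ ≤ dist a b) :
    ∑ x ∈ ω, ∑ y ∈ ω', (if x = y then 0 else edist x y ^ (-s))
      ≤ ω.card * ω'.card * ENNReal.ofReal (δ ^ (-s)) :=
  calc _ ≤ ∑ _x ∈ ω, ∑ _y ∈ ω', ENNReal.ofReal (δ ^ (-s)) := by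
        refine Finset.sum_le_sum fun x hx => Finset.sum_le_sum fun y hy => ?_
        split_ifs
        exacts [zero_le, edist_rpow_neg_le hs hδ (hsep x hx y hy)]
    _ = _ := by simp only [Finset.sum_const, nsmul_eq_mul, mul_assoc]

lemma rieszEnergy_union_le (hs : 0 ≤ s) (hδ : 0 < δ) {ω ω' : Finset X}
    (hsep : ∀ a ∈ ω, ∀ b ∈ ω', δ ≤ dist a b) :
    rieszEnergy s (ω ∪ ω') ≤ rieszEnergy s ω + rieszEnergy s ω'
      + 2 * ω.card * ω'.card * ENNReal.ofReal (δ ^ (-s)) := by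
  have hsep' : ∀ b ∈ ω', ∀ a ∈ ω, δ ≤ dist b a := fun b hb a ha =>
    (hsep a ha b hb).trans_eq (dist_comm a b)
  calc rieszEnergy s (ω ∪ ω')
      = rieszEnergy s ω + rieszEnergy s ω'
        + (∑ x ∈ ω, ∑ y ∈ ω', (if x = y then 0 else edist x y ^ (-s))
          + ∑ x ∈ ω', ∑ y ∈ ω, (if x = y then 0 else edist x y ^ (-s))) := by
        simp only [rieszEnergy, Finset.sum_union (disjoint_of_forall_le_dist hδ hsep),
          Finset.sum_add_distrib]
        ring
    _ ≤ rieszEnergy s ω + rieszEnergy s ω'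
        + (ω.card * ω'.card * ENNReal.ofReal (δ ^ (-s))
          + ω'.card * ω.card * ENNReal.ofReal (δ ^ (-s))) := by
        grw [sum_sum_ite_edist_rpow_neg_le hs hδ hsep, sum_sum_ite_edist_rpow_neg_le hs hδ hsep']
    _ = _ := by ring

lemma minRieszEnergy_union_le (hs : 0 ≤ s) (hδ : 0 < δ) {A B : Set X}
    (hsep : ∀ a ∈ A, ∀ b ∈ B, δ ≤ dist a b) (m n : ℕ) :
    minRieszEnergy s (A ∪ B) (m + n) ≤ minRieszEnergy s A m + minRieszEnergy s B n
      + 2 * m * n * ENNReal.ofReal (δ ^ (-s)) := by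
  simp only [minRieszEnergy, ENNReal.iInf_add, ENNReal.add_iInf, le_iInf_iff]
  rintro ω' hω' rfl ω hω rfl
  have hsep' : ∀ a ∈ ω, ∀ b ∈ ω', δ ≤ dist a b := fun a ha b hb =>
    hsep a (hω ha) b (hω' hb)
  calc _ ≤ rieszEnergy s (ω ∪ ω') := by
        rw [← Finset.card_union_of_disjoint (disjoint_of_forall_le_dist hδ hsep')]
        exact minRieszEnergy_le_rieszEnergy s (by simpa using Set.union_subset_union hω hω')
    _ ≤ _ := rieszEnergy_union_le hs hδ hsep'

end Energy

section Tau

variable {s : ℝ} {d : ℕ}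

lemma tauNorm_pos {N : ℕ} (hN : 1 < N) : 0 < tauNorm s d N := by
  have hN' : (1 : ℝ) < N := by exact_mod_cast hN
  unfold tauNorm
  split_ifs
  · have := Real.log_pos hN'
    positivity
  · exact Real.rpow_pos_of_pos (by linarith) _

lemma tendsto_atTop_of_tendsto_div {φ : ℕ → ℕ} {β : ℝ} (hβ : 0 < β)
    (hφ : Tendsto (fun N => (φ N : ℝ) / N) atTop (𝓝 β)) : Tendsto φ atTop atTop := by
  rw [← tendsto_natCast_atTop_iff (R := ℝ)]
  refine (hφ.pos_mul_atTop hβ tendsto_natCast_atTop_atTop).congr' ?_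
  filter_upwards [eventually_ne_atTop 0] with N hN
  field_simp

lemma floor_mul_le_self {α : ℝ} (hα : α ≤ 1) (N : ℕ) : ⌊α * N⌋₊ ≤ N :=
  Nat.floor_le_of_le (mul_le_of_le_one_left (Nat.cast_nonneg N) hα)

lemma tendsto_sub_floor_mul_div {α : ℝ} (hα0 : 0 ≤ α) (hα1 : α ≤ 1) :
    Tendsto (fun N : ℕ => ((N - ⌊α * N⌋₊ : ℕ) : ℝ) / N) atTop (𝓝 (1 - α)) := by
  refine (tendsto_const_nhds.sub
    ((tendsto_nat_floor_mul_div_atTop hα0).comp tendsto_natCast_atTop_atTop)).congr' ?_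
  filter_upwards [eventually_ne_atTop 0] with N hN
  rw [Nat.cast_sub (floor_mul_le_self hα1 N), Function.comp_apply, sub_div,
    div_self (by positivity)]

lemma tendsto_log_comp_div_log {φ : ℕ → ℕ} {β : ℝ} (hβ : 0 < β)
    (hφ : Tendsto (fun N => (φ N : ℝ) / N) atTop (𝓝 β)) :
    Tendsto (fun N => Real.log (φ N) / Real.log N) atTop (𝓝 1) := by
  have hlog :
      Tendsto (fun N : ℕ => Real.log ((φ N : ℝ) / N) / Real.log N + 1) atTop (𝓝 (0 + 1)) :=
    ((hφ.log hβ.ne').div_atTop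
      (Real.tendsto_log_atTop.comp tendsto_natCast_atTop_atTop)).add_const 1
  rw [zero_add] at hlog
  refine hlog.congr' ?_
  filter_upwards [hφ.eventually (lt_mem_nhds hβ), eventually_gt_atTop 1] with N hφN hN
  have hφ0 : (φ N : ℝ) ≠ 0 := fun h => by simp [h] at hφN
  have hlogN : Real.log N ≠ 0 := (Real.log_pos (by exact_mod_cast hN)).ne'
  rw [Real.log_div hφ0 (by positivity)]
  field_simp
  ring

lemma tendsto_tauNorm_comp_div (hd : d ≠ 0) {φ : ℕ → ℕ} {β : ℝ} (hβ : 0 < β)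
    (hφ : Tendsto (fun N => (φ N : ℝ) / N) atTop (𝓝 β)) :
    Tendsto (fun N => tauNorm s d (φ N) / tauNorm s d N) atTop (𝓝 (β ^ (1 + s / d))) := by
  by_cases hsd : s = d
  · have hexp : 1 + s / d = (2 : ℕ) := by
      rw [hsd, div_self (by exact_mod_cast hd)]; norm_num
    rw [hexp, Real.rpow_natCast, ← mul_one (β ^ 2)]
    refine ((hφ.pow 2).mul (tendsto_log_comp_div_log hβ hφ)).congr' ?_
    filter_upwards [eventually_gt_atTop 1] with N hN
    have hlogN : Real.log N ≠ 0 := (Real.log_pos (by exact_mod_cast hN)).ne'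
    have hN0 : (N : ℝ) ≠ 0 := by positivity
    simp only [tauNorm, if_pos hsd]
    field_simp
  · refine (hφ.rpow_const (Or.inl hβ.ne')).congr' ?_
    filter_upwards with N
    simp only [tauNorm, if_neg hsd]
    rw [Real.div_rpow (by positivity) (by positivity)]

lemma tendsto_sq_div_tauNorm (hd : d ≠ 0) (hs : (d : ℝ) ≤ s) :
    Tendsto (fun N : ℕ => (N : ℝ) ^ 2 / tauNorm s d N) atTop (𝓝 0) := by
  by_cases hsd : s = d
  · refine (Real.tendsto_log_atTop.comp tendsto_natCast_atTop_atTop).inv_tendsto_atTop.congr' ?_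
    filter_upwards [eventually_gt_atTop 1] with N hN
    have hlogN : Real.log N ≠ 0 := (Real.log_pos (by exact_mod_cast hN)).ne'
    have hN0 : (N : ℝ) ≠ 0 := by positivity
    simp only [tauNorm, if_pos hsd, Pi.inv_apply, Function.comp_apply]
    field_simp
  · have hpos : 0 < s / d - 1 := by
      rw [sub_pos, one_lt_div (by positivity)]
      exact lt_of_le_of_ne hs (Ne.symm hsd)
    refine ((tendsto_rpow_neg_atTop hpos).comp tendsto_natCast_atTop_atTop).congr' ?_
    filter_upwards [eventually_gt_atTop 0] with N hN
    have hN0 : (0 : ℝ) < N := by exact_mod_cast hN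
    simp only [tauNorm, if_neg hsd, Function.comp_apply]
    rw [← Real.rpow_natCast, ← Real.rpow_sub hN0]
    congr 1
    push_cast
    ring

end Tau

lemma ENNReal.limsup_add_le' {ι : Type*} {f : Filter ι} (u v : ι → ℝ≥0∞) :
    f.limsup (u + v) ≤ f.limsup u + f.limsup v := by
  refine ENNReal.le_of_forall_pos_le_add fun ε hε hfin => ?_
  have hε2 : (ε / 2 : ℝ≥0∞) ≠ 0 := by simpa using hε.ne'
  have hu := eventually_lt_of_limsup_lt (ENNReal.lt_add_right
    (ENNReal.add_lt_top.1 hfin).1.ne hε2)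
  have hv := eventually_lt_of_limsup_lt (ENNReal.lt_add_right
    (ENNReal.add_lt_top.1 hfin).2.ne hε2)
  refine limsup_le_of_le (by isBoundedDefault) ?_
  filter_upwards [hu, hv] with i hui hvi
  calc u i + v i ≤ (f.limsup u + ε / 2) + (f.limsup v + ε / 2) := add_le_add hui.le hvi.le
    _ = f.limsup u + f.limsup v + ε := by rw [add_add_add_comm, ENNReal.add_halves]

lemma ENNReal.limsup_comp_mul_le {a r : ℕ → ℝ≥0∞} {m : ℕ → ℕ} {c : ℝ≥0∞}
    (hc0 : c ≠ 0) (hc : c ≠ ∞) (hm : Tendsto m atTop atTop) (hr : Tendsto r atTop (𝓝 c)) :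
    atTop.limsup (a ∘ m * r) ≤ atTop.limsup a * c := by
  have hlim := hr.limsup_eq
  calc atTop.limsup (a ∘ m * r) ≤ atTop.limsup (a ∘ m) * atTop.limsup r :=
        ENNReal.limsup_mul_le' (by rw [hlim]; exact Or.inr hc) (by rw [hlim]; exact Or.inr hc0)
    _ ≤ atTop.limsup a * c := by rw [hlim]; exact mul_le_mul_left hm.limsup_comp_le_limsup c

lemma ENNReal.div_ofReal_eq_div_ofReal_mul_ofReal_div (u : ℝ≥0∞) {a b : ℝ} (ha : 0 < a)
    (hb : 0 < b) :
    u / ENNReal.ofReal b = u / ENNReal.ofReal a * ENNReal.ofReal (a / b) := by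
  rw [ENNReal.ofReal_div_of_pos hb, div_eq_mul_inv, div_eq_mul_inv, div_eq_mul_inv, mul_assoc,
    ← mul_assoc (ENNReal.ofReal a)⁻¹, ENNReal.inv_mul_cancel (by simpa using ha) (by simp),
    one_mul]

lemma mul_rpow_div_add_mul_rpow_div {a b q : ℝ} (ha : 0 < a) (hb : 0 < b) (hq : 0 < q) :
    a * (a ^ (-q) / (a ^ (-q) + b ^ (-q))) ^ (1 + q⁻¹)
      + b * (b ^ (-q) / (a ^ (-q) + b ^ (-q))) ^ (1 + q⁻¹)
      = (a ^ (-q) + b ^ (-q)) ^ (-q⁻¹) := by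
  set S := a ^ (-q) + b ^ (-q)
  have hS : 0 < S := by positivity
  have hexp : 1 + -q * (1 + q⁻¹) = -q := by field_simp; ring
  have hterm {x : ℝ} (hx : 0 < x) :
      x * (x ^ (-q) / S) ^ (1 + q⁻¹) = x ^ (-q) * S ^ (-(1 + q⁻¹)) := by
    rw [Real.div_rpow (by positivity) hS.le, ← Real.rpow_mul hx.le, div_eq_mul_inv,
      ← Real.rpow_neg hS.le, ← mul_assoc, ← Real.rpow_one_add' hx.le (by linarith), hexp]
  rw [hterm ha, hterm hb, ← add_mul, neg_add, Real.rpow_add hS, Real.rpow_neg_one,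
    mul_inv_cancel_left₀ hS.ne']

lemma ENNReal.le_rpow_neg_add_rpow_neg {x a b : ℝ≥0∞} {q : ℝ} (hq : 0 < q) (ha : x ≤ a)
    (hb : x ≤ b) (h : ∀ α : ℝ, 0 < α → α < 1 →
      x ≤ a * ENNReal.ofReal (α ^ (1 + q⁻¹)) + b * ENNReal.ofReal ((1 - α) ^ (1 + q⁻¹))) :
    x ≤ (a ^ (-q) + b ^ (-q)) ^ (-q⁻¹) := by
  have hq' : -q < 0 := neg_neg_of_pos hq
  have hself (c : ℝ≥0∞) : (c ^ (-q)) ^ (-q⁻¹) = c := by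
    rw [← ENNReal.rpow_mul, neg_mul_neg, mul_inv_cancel₀ hq.ne', ENNReal.rpow_one]
  rcases eq_or_ne a 0 with rfl | ha0
  · exact ha.trans zero_le
  rcases eq_or_ne b 0 with rfl | hb0
  · exact hb.trans zero_le
  rcases eq_or_ne a ∞ with rfl | hatop
  · rwa [ENNReal.top_rpow_of_neg hq', zero_add, hself]
  rcases eq_or_ne b ∞ with rfl | hbtop
  · rwa [ENNReal.top_rpow_of_neg hq', add_zero, hself]
  have haR : 0 < a.toReal := ENNReal.toReal_pos ha0 hatop
  have hbR : 0 < b.toReal := ENNReal.toReal_pos hb0 hbtop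
  rw [← ENNReal.ofReal_toReal hatop, ← ENNReal.ofReal_toReal hbtop] at h ⊢
  set S := a.toReal ^ (-q) + b.toReal ^ (-q)
  have hS : 0 < S := by positivity
  have hα1 : a.toReal ^ (-q) / S < 1 := by
    rw [div_lt_one hS]
    exact lt_add_of_pos_right _ (by positivity)
  have hα' : 1 - a.toReal ^ (-q) / S = b.toReal ^ (-q) / S := by
    field_simp
    ring
  refine (h _ (by positivity) hα1).trans_eq ?_
  rw [hα', ← ENNReal.ofReal_mul haR.le, ← ENNReal.ofReal_mul hbR.le,
    ← ENNReal.ofReal_add (by positivity) (by positivity),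
    mul_rpow_div_add_mul_rpow_div haR hbR hq, ENNReal.ofReal_rpow_of_pos haR,
    ENNReal.ofReal_rpow_of_pos hbR, ← ENNReal.ofReal_add (by positivity) (by positivity),
    ENNReal.ofReal_rpow_of_pos hS]

noncomputable def upperNormalizedEnergy {X : Type*} [PseudoEMetricSpace X] (s : ℝ) (d : ℕ)
    (A : Set X) : ℝ≥0∞ :=
  atTop.limsup fun N : ℕ => minRieszEnergy s A N / ENNReal.ofReal (tauNorm s d N)

section Union

variable {X : Type*} [PseudoMetricSpace X] {s δ : ℝ} {d : ℕ} {A B : Set X}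

lemma upperNormalizedEnergy_anti {A' : Set X} (h : A ⊆ A') :
    upperNormalizedEnergy s d A' ≤ upperNormalizedEnergy s d A :=
  limsup_le_limsup (Eventually.of_forall fun N =>
    ENNReal.div_le_div_right (minRieszEnergy_anti s h N) _)

lemma minRieszEnergy_union_div_tauNorm_le (hs : 0 ≤ s) (hδ : 0 < δ)
    (hsep : ∀ a ∈ A, ∀ b ∈ B, δ ≤ dist a b) {m n : ℕ} (hm : 1 < m) (hn : 1 < n) :
    minRieszEnergy s (A ∪ B) (m + n) / ENNReal.ofReal (tauNorm s d (m + n)) ≤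
      minRieszEnergy s A m / ENNReal.ofReal (tauNorm s d m)
          * ENNReal.ofReal (tauNorm s d m / tauNorm s d (m + n))
        + minRieszEnergy s B n / ENNReal.ofReal (tauNorm s d n)
          * ENNReal.ofReal (tauNorm s d n / tauNorm s d (m + n))
        + ENNReal.ofReal (((m + n : ℕ) : ℝ) ^ 2 / tauNorm s d (m + n))
          * ENNReal.ofReal (δ ^ (-s)) := by
  have hτ : 0 < tauNorm s d (m + n) := tauNorm_pos (by omega)
  have hcross : (2 * m * n : ℝ≥0∞) ≤ ENNReal.ofReal (((m + n : ℕ) : ℝ) ^ 2) := by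
    rw [ENNReal.ofReal_pow (Nat.cast_nonneg _), ENNReal.ofReal_natCast]
    exact_mod_cast (show 2 * m * n ≤ (m + n) ^ 2 by nlinarith)
  rw [← ENNReal.div_ofReal_eq_div_ofReal_mul_ofReal_div _ (tauNorm_pos hm) hτ,
    ← ENNReal.div_ofReal_eq_div_ofReal_mul_ofReal_div _ (tauNorm_pos hn) hτ,
    ENNReal.ofReal_div_of_pos hτ, ← ENNReal.mul_div_right_comm]
  calc _ ≤ (minRieszEnergy s A m + minRieszEnergy s B n
          + 2 * m * n * ENNReal.ofReal (δ ^ (-s))) / ENNReal.ofReal (tauNorm s d (m + n)) := by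
        gcongr
        exact minRieszEnergy_union_le hs hδ hsep m n
    _ ≤ _ := by
        simp only [ENNReal.add_div]
        gcongr

lemma upperNormalizedEnergy_union_le (hd : d ≠ 0) (hs : (d : ℝ) ≤ s) (hδ : 0 < δ)
    (hsep : ∀ a ∈ A, ∀ b ∈ B, δ ≤ dist a b) {α : ℝ} (hα0 : 0 < α) (hα1 : α < 1) :
    upperNormalizedEnergy s d (A ∪ B) ≤
      upperNormalizedEnergy s d A * ENNReal.ofReal (α ^ (1 + s / d))
        + upperNormalizedEnergy s d B * ENNReal.ofReal ((1 - α) ^ (1 + s / d)) := by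
  have hs0 : 0 ≤ s := le_trans (Nat.cast_nonneg d) hs
  set m : ℕ → ℕ := fun N => ⌊α * N⌋₊
  set n : ℕ → ℕ := fun N => N - m N
  have hmn (N : ℕ) : m N + n N = N := Nat.add_sub_cancel' (floor_mul_le_self hα1.le N)
  have hm_div : Tendsto (fun N => (m N : ℝ) / N) atTop (𝓝 α) :=
    (tendsto_nat_floor_mul_div_atTop hα0.le).comp tendsto_natCast_atTop_atTop
  have hn_div : Tendsto (fun N => (n N : ℝ) / N) atTop (𝓝 (1 - α)) :=
    tendsto_sub_floor_mul_div hα0.le hα1.le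
  have hm_top := tendsto_atTop_of_tendsto_div hα0 hm_div
  have hn_top := tendsto_atTop_of_tendsto_div (sub_pos.2 hα1) hn_div
  set g : Set X → ℕ → ℝ≥0∞ := fun S N =>
    minRieszEnergy s S N / ENNReal.ofReal (tauNorm s d N)
  set ratio : (ℕ → ℕ) → ℕ → ℝ≥0∞ := fun φ N =>
    ENNReal.ofReal (tauNorm s d (φ N) / tauNorm s d N)
  set cross : ℕ → ℝ≥0∞ := fun N =>
    ENNReal.ofReal ((N : ℝ) ^ 2 / tauNorm s d N) * ENNReal.ofReal (δ ^ (-s))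
  have hsplit : g (A ∪ B) ≤ᶠ[atTop] g A ∘ m * ratio m + g B ∘ n * ratio n + cross := by
    filter_upwards [hm_top.eventually_gt_atTop 1, hn_top.eventually_gt_atTop 1] with N hm hn
    have := minRieszEnergy_union_div_tauNorm_le (d := d) hs0 hδ hsep hm hn
    rwa [hmn] at this
  have hcross : Tendsto cross atTop (𝓝 0) := by
    simpa using ENNReal.Tendsto.mul_const
      (ENNReal.tendsto_ofReal (tendsto_sq_div_tauNorm hd hs)) (Or.inr ENNReal.ofReal_ne_top)
  have hweight {β : ℝ} (hβ : 0 < β) : ENNReal.ofReal (β ^ (1 + s / d)) ≠ 0 := by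
    simpa using Real.rpow_pos_of_pos hβ _
  calc upperNormalizedEnergy s d (A ∪ B)
      ≤ atTop.limsup (g A ∘ m * ratio m + g B ∘ n * ratio n + cross) :=
        limsup_le_limsup hsplit
    _ = atTop.limsup (g A ∘ m * ratio m + g B ∘ n * ratio n) :=
        ENNReal.limsup_add_of_right_tendsto_zero hcross _
    _ ≤ atTop.limsup (g A ∘ m * ratio m) + atTop.limsup (g B ∘ n * ratio n) :=
        ENNReal.limsup_add_le' _ _
    _ ≤ _ := add_le_add
          (ENNReal.limsup_comp_mul_le (hweight hα0) ENNReal.ofReal_ne_top hm_top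
            (ENNReal.tendsto_ofReal (tendsto_tauNorm_comp_div hd hα0 hm_div)))
          (ENNReal.limsup_comp_mul_le (hweight (sub_pos.2 hα1)) ENNReal.ofReal_ne_top hn_top
            (ENNReal.tendsto_ofReal (tendsto_tauNorm_comp_div hd (sub_pos.2 hα1) hn_div)))

end Union

theorem limsup_union_le_general (d d' : ℕ) (hd : 1 ≤ d) (s : ℝ) (hs : (d : ℝ) ≤ s)
    (A B : Set (EuclideanSpace ℝ (Fin d')))
    (hdist : ∃ δ : ℝ, 0 < δ ∧ ∀ a ∈ A, ∀ b ∈ B, δ ≤ dist a b) :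
    (atTop.limsup fun N : ℕ =>
        minRieszEnergy s (A ∪ B) N / ENNReal.ofReal (tauNorm s d N)) ≤
      ((atTop.limsup fun N : ℕ =>
          minRieszEnergy s A N / ENNReal.ofReal (tauNorm s d N)) ^ (-(d : ℝ) / s) +
        (atTop.limsup fun N : ℕ =>
          minRieszEnergy s B N / ENNReal.ofReal (tauNorm s d N)) ^ (-(d : ℝ) / s))
          ^ (-(s / (d : ℝ))) := by
  obtain ⟨δ, hδ, hsep⟩ := hdist
  have hd0 : (0 : ℝ) < d := Nat.cast_pos.2 hd
  have hq : 0 < (d : ℝ) / s := div_pos hd0 (hd0.trans_le hs)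
  have key := ENNReal.le_rpow_neg_add_rpow_neg hq
    (upperNormalizedEnergy_anti (s := s) (d := d) subset_union_left)
    (upperNormalizedEnergy_anti subset_union_right)
    fun α hα0 hα1 => by
      simpa only [inv_div] using upperNormalizedEnergy_union_le (by omega) hs hδ hsep hα0 hα1
  rwa [inv_div, ← neg_div] at key

/-- upper bound for the lim sup of the normalized minimal energy of a union of
two bounded sets at positive distance, with `ENNReal` rpow conventions at `0` and `∞`. -/
theorem limsup_union_le (d d' : ℕ) (hd : 1 ≤ d) (hdd : d ≤ d') (s : ℝ) (hs : (d : ℝ) ≤ s)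
    (A B : Set (EuclideanSpace ℝ (Fin d')))
    (hA : Bornology.IsBounded A) (hB : Bornology.IsBounded B)
    (hdist : ∃ δ : ℝ, 0 < δ ∧ ∀ a ∈ A, ∀ b ∈ B, δ ≤ dist a b) :
    (atTop.limsup fun N : ℕ =>
        minRieszEnergy s (A ∪ B) N / ENNReal.ofReal (tauNorm s d N)) ≤
      ((atTop.limsup fun N : ℕ =>
          minRieszEnergy s A N / ENNReal.ofReal (tauNorm s d N)) ^ (-(d : ℝ) / s) +
        (atTop.limsup fun N : ℕ =>
          minRieszEnergy s B N / ENNReal.ofReal (tauNorm s d N)) ^ (-(d : ℝ) / s))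
          ^ (-(s / (d : ℝ))) :=
  limsup_union_le_general d d' hd s hs A B hdist
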